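/- arXiv:math/0702568 — 6 statements merged into one kernel-verified Lean document; each statement's English description precedes it below -/
import Mathlib

section
/- For all vertices v, x, y of the tree T and every z ∈ 𝔻, one has c_z(x,x) = I and c_z(v,x) c_z(x,y) = c_z(v,y); equivalently, the product of edge operators c_z(v_0,v_1) c_z(v_1,v_2) ⋯ c_z(v_{n−1},v_n) taken along any edge-path v_0, v_1, …, v_n in T depends only on the endpoints v_0 and v_n. -/
noncomputable section

open scoped ComplexConjugate

/-- `ℓ²(X)`: the Hilbert space of square-summable complex functions on `X`. -/
abbrev ell2 (X : Type) : Type := lp (fun _ : X => ℂ) 2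

/-- The Dirac function `δ_v` at a vertex `v`. -/
noncomputable def delta {X : Type} [DecidableEq X] (v : X) : ell2 X :=
  lp.single 2 v (1 : ℂ)

/-- `w = √(1 − z²)`, using the principal branch of the square root, which is
holomorphic off the negative real axis and positive on the positive reals. -/
noncomputable def W (z : ℂ) : ℂ := (1 - z ^ 2) ^ ((1 : ℂ) / 2)

/-- The defining property of the edge operator `c_z(x,y)` for adjacent vertices
`x, y`: it sends `δ_x ↦ wδ_x − zδ_y`, `δ_y ↦ wδ_y + zδ_x`, and fixes `δ_v` for
every other vertex `v`. -/
def IsEdgeOp {X : Type} [DecidableEq X] (z : ℂ) (x y : X)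
    (A : ell2 X →L[ℂ] ell2 X) : Prop :=
  A (delta x) = W z • delta x - z • delta y ∧
  A (delta y) = W z • delta y + z • delta x ∧
  ∀ v : X, v ≠ x → v ≠ y → A (delta v) = delta v

/-- The product `f(v₀,v₁) * f(v₁,v₂) * ⋯ * f(v_{n−1},v_n)` along a walk
`v₀, v₁, …, v_n`. -/
def walkProd {X : Type} {T : SimpleGraph X} {E : Type} [Monoid E]
    (f : X → X → E) : {a b : X} → T.Walk a b → E
  | _, _, SimpleGraph.Walk.nil => 1
  | _, _, SimpleGraph.Walk.cons (u := u) (v := v) _ p => f u v * walkProd f p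

/-- Two continuous linear maps on `ℓ²(X)` agreeing on all Dirac functions are equal. -/
lemma ext_delta {X : Type} [DecidableEq X] {A B : ell2 X →L[ℂ] ell2 X}
    (h : ∀ v : X, A (delta v) = B (delta v)) : A = B := by
  refine ContinuousLinearMap.ext fun f => ?_
  have hf : HasSum (fun v : X => lp.single 2 v (f v)) f :=
    lp.hasSum_single (by norm_num) f
  have key : ∀ v : X, lp.single 2 v (f v) = f v • delta v := by
    intro v
    rw [delta, ← lp.single_smul]
    norm_num
  have hA : HasSum (fun v : X => A (f v • delta v)) (A f) := by
    simpa only [key] using A.hasSum hf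
  have hB : HasSum (fun v : X => A (f v • delta v)) (B f) := by
    have := B.hasSum hf
    simpa only [key, map_smul, h] using this
  exact hA.unique hB

lemma W_mul_self {z : ℂ} (hz : z ∈ Metric.ball (0 : ℂ) 1) : W z * W z = 1 - z ^ 2 := by
  have hz' : ‖z‖ < 1 := by simpa using mem_ball_zero_iff.mp hz
  have hne : (1 : ℂ) - z ^ 2 ≠ 0 := by
    refine sub_ne_zero.mpr (Ne.symm ?_)
    intro h
    have : ‖z ^ 2‖ = 1 := by rw [h]; simp
    rw [norm_pow] at this
    nlinarith [norm_nonneg z]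
  have : W z * W z = (1 - z ^ 2) ^ ((1 : ℂ) / 2 + 1 / 2) := by
    rw [Complex.cpow_add _ _ hne]; rfl
  rw [this]
  norm_num

lemma walkProd_append {X : Type} {T : SimpleGraph X} {E : Type} [Monoid E]
    (f : X → X → E) {a b c : X} (p : T.Walk a b) (q : T.Walk b c) :
    walkProd f (p.append q) = walkProd f p * walkProd f q := by
  induction p with
  | nil => simp [walkProd]
  | cons h p ih => rw [SimpleGraph.Walk.cons_append]; simp [walkProd, ih, mul_assoc]

/-- In a tree, every path is a geodesic. -/
lemma path_length_eq_dist {X : Type} [DecidableEq X] {T : SimpleGraph X}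
    (hconn : T.Connected) (hacyc : T.IsAcyclic) {u v : X}
    (p : T.Walk u v) (hp : p.IsPath) : p.length = T.dist u v := by
  obtain ⟨q, hq⟩ := hconn.exists_walk_length_eq_dist u v
  have hpq : p = q.bypass := by
    have := hacyc.path_unique ⟨p, hp⟩ ⟨q.bypass, q.bypass_isPath⟩
    exact congrArg Subtype.val this
  have h1 : p.length ≤ T.dist u v := by
    rw [hpq, ← hq]; exact q.length_bypass_le
  have h2 : T.dist u v ≤ p.length := SimpleGraph.dist_le p
  omega

/-- Cancellation: the edge operators in opposite directions are inverse. -/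
lemma edge_cancel {X : Type} [DecidableEq X] {z : ℂ} (hz : z ∈ Metric.ball (0 : ℂ) 1)
    {u v : X} {A B : ell2 X →L[ℂ] ell2 X}
    (hA : IsEdgeOp z u v A) (hB : IsEdgeOp z v u B) : A * B = 1 := by
  obtain ⟨h1, h2, h3⟩ := hA
  obtain ⟨k1, k2, k3⟩ := hB
  have hW := W_mul_self hz
  apply ext_delta
  intro x
  rcases eq_or_ne x u with rfl | hxu
  · rw [ContinuousLinearMap.mul_apply, k2, map_add, map_smul, map_smul, h1, h2,
      ContinuousLinearMap.one_apply]
    match_scalars <;> first | ring1 | linear_combination hW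
  · rcases eq_or_ne x v with rfl | hxv
    · rw [ContinuousLinearMap.mul_apply, k1, map_sub, map_smul, map_smul, h2, h1,
        ContinuousLinearMap.one_apply]
      match_scalars <;> first | ring1 | linear_combination hW
    · rw [ContinuousLinearMap.mul_apply, k3 x hxv hxu, h3 x hxu hxv,
        ContinuousLinearMap.one_apply]

/-- For all vertices `v, x, y` of the tree `T` and every `z ∈ 𝔻`, one has
`c_z(x,x) = I` and `c_z(v,x) c_z(x,y) = c_z(v,y)`; equivalently, the product of edge
operators along any edge-path in `T` depends only on the endpoints. -/
theorem cocycle_identity {X : Type} [DecidableEq X] (T : SimpleGraph X)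
    (hconn : T.Connected) (hacyc : T.IsAcyclic)
    (c : ℂ → X → X → (ell2 X →L[ℂ] ell2 X))
    (hedge : ∀ z ∈ Metric.ball (0 : ℂ) 1, ∀ u v : X, T.Adj u v →
      IsEdgeOp z u v (c z u v))
    (hgeo : ∀ z ∈ Metric.ball (0 : ℂ) 1, ∀ u v : X, ∀ p : T.Walk u v,
      p.length = T.dist u v → c z u v = walkProd (c z) p) :
    ∀ z ∈ Metric.ball (0 : ℂ) 1,
      (∀ x : X, c z x x = 1) ∧
      (∀ v x y : X, c z v x * c z x y = c z v y) ∧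
      (∀ (x y : X) (p : T.Walk x y), walkProd (c z) p = c z x y) := by
  intro z hz
  -- any path computes `c z`
  have hpath : ∀ (u v : X) (p : T.Walk u v), p.IsPath → c z u v = walkProd (c z) p := by
    intro u v p hp
    exact hgeo z hz u v p (path_length_eq_dist hconn hacyc p hp)
  have hnil : ∀ x : X, c z x x = 1 := by
    intro x
    exact (hpath x x SimpleGraph.Walk.nil SimpleGraph.Walk.IsPath.nil).trans rfl
  -- every walk computes `c z`
  have hall : ∀ (x y : X) (p : T.Walk x y), walkProd (c z) p = c z x y := by
    intro x y p
    induction p with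
    | nil => simp only [walkProd, hnil]
    | @cons u w y h q ih =>
      rw [walkProd, ih]
      obtain ⟨p0⟩ := hconn.preconnected w y
      have hp : p0.bypass.IsPath := p0.bypass_isPath
      have hcwy : c z w y = walkProd (c z) p0.bypass := hpath w y p0.bypass hp
      have hcancel : c z u w * c z w u = 1 :=
        edge_cancel hz (hedge z hz u w h) (hedge z hz w u h.symm)
      by_cases hu : u ∈ p0.bypass.support
      · -- the path from `w` to `y` starts with the edge `w u`
        have htake : (p0.bypass.takeUntil u hu) = SimpleGraph.Walk.cons h.symm
            SimpleGraph.Walk.nil := by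
          have := hacyc.path_unique ⟨p0.bypass.takeUntil u hu, hp.takeUntil hu⟩
            (SimpleGraph.Path.singleton h.symm)
          simpa [SimpleGraph.Path.singleton] using congrArg Subtype.val this
        have hdrop : c z u y = walkProd (c z) (p0.bypass.dropUntil u hu) :=
          hpath u y _ (hp.dropUntil hu)
        have hsplit : walkProd (c z) p0.bypass =
            c z w u * walkProd (c z) (p0.bypass.dropUntil u hu) := by
          conv_lhs => rw [← p0.bypass.take_spec hu]
          rw [walkProd_append, htake]
          simp [walkProd]
        rw [hcwy, hsplit, ← hdrop, ← mul_assoc, hcancel, one_mul]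
      · -- `cons h p0.bypass` is already a path from `u` to `y`
        have : c z u y = walkProd (c z) (SimpleGraph.Walk.cons h p0.bypass) :=
          hpath u y _ (hp.cons hu)
        rw [this, walkProd, ← hcwy]
  refine ⟨hnil, ?_, hall⟩
  intro v x y
  obtain ⟨p1⟩ := hconn.preconnected v x
  obtain ⟨p2⟩ := hconn.preconnected x y
  rw [← hall v x p1, ← hall x y p2, ← walkProd_append, hall v y (p1.append p2)]
end
end

section
/- Let x, y be vertices of the tree T with d(x,y) = n ≥ 1 and let x = v_0, v_1, …, v_n = y be the geodesic edge-path from x to y. Then for every z ∈ 𝔻, c_z(x,y)δ_y = wδ_{v_n} + wzδ_{v_{n−1}} + wz²δ_{v_{n−2}} + ⋯ + wz^{n−1}δ_{v_1} + z^nδ_{v_0}. -/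
noncomputable section

open scoped ComplexConjugate

/-! The geodesic hypothesis writes `c_z(x,y)` as the product of the edge operators along `p`,
which is a path because its length is `d(x,y)`. Apply the factors to `δ_y` from the right: when the factor
`c_z(v_{k-1}, v_k)` acts, the vector built so far is `z^{n-k} δ_{v_k}` plus a combination of
`δ_{v_j}` with `j > k`; the factor fixes the latter (a path does not revisit `v_{k-1}` or `v_k`)
and turns the former into `z^{n-k} (w δ_{v_k} + z δ_{v_{k-1}})`. -/

open Finset

theorem Finset.sum_Icc_one_succ {M : Type*} [AddCommMonoid M] (f : ℕ → M) (n : ℕ) :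
    ∑ i ∈ Icc 1 (n + 1), f i = f 1 + ∑ i ∈ Icc 1 n, f (i + 1) := by
  induction n with
  | zero => simp
  | succ n ih => rw [sum_Icc_succ_top (by omega), ih, sum_Icc_succ_top (by omega), add_assoc]

namespace SimpleGraph.Walk

variable {X : Type} {T : SimpleGraph X}

theorem IsPath.getVert_ne_start {x y : X} {p : T.Walk x y} (hp : p.IsPath) {i : ℕ}
    (hi₀ : 0 < i) (hi : i ≤ p.length) : p.getVert i ≠ x := fun h =>
  hi₀.ne' (hp.getVert_injOn hi (Nat.zero_le _) (h.trans p.getVert_zero.symm))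

end SimpleGraph.Walk

open SimpleGraph

theorem walkProd_apply_delta_end {X : Type} [DecidableEq X] {T : SimpleGraph X} (z : ℂ)
    (c : X → X → (ell2 X →L[ℂ] ell2 X)) (hedge : ∀ u v : X, T.Adj u v → IsEdgeOp z u v (c u v))
    {x y : X} (p : T.Walk x y) (hp : p.IsPath) :
    walkProd c p (delta y) = (z ^ p.length) • delta x +
      ∑ i ∈ Icc 1 p.length, (W z * z ^ (p.length - i)) • delta (p.getVert i) := by
  induction p with
  | nil => simp [walkProd]
  | @cons x v y hxv q ih =>
    obtain ⟨hq, hxq⟩ := (Walk.cons_isPath_iff hxv q).mp hp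
    obtain ⟨-, hv, hfix⟩ := hedge x v hxv
    have hfix_tail : ∀ i ∈ Icc 1 q.length, c x v (delta (q.getVert i)) = delta (q.getVert i) :=
      fun i hi => hfix _ (fun h => hxq (h ▸ q.getVert_mem_support i))
        (hq.getVert_ne_start (mem_Icc.mp hi).1 (mem_Icc.mp hi).2)
    calc walkProd c (Walk.cons hxv q) (delta y) = c x v (walkProd c q (delta y)) := rfl
      _ = z ^ q.length • (W z • delta v + z • delta x) +
            ∑ i ∈ Icc 1 q.length, (W z * z ^ (q.length - i)) • delta (q.getVert i) := by
        rw [ih hq, map_add, map_smul, hv, map_sum]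
        congr 1
        refine sum_congr rfl fun i hi => ?_
        rw [map_smul, hfix_tail i hi]
      _ = _ := by
        rw [Walk.length_cons, sum_Icc_one_succ]
        simp only [Walk.getVert_cons_succ, Walk.getVert_zero, Nat.add_sub_add_right]
        rw [Nat.add_sub_cancel, pow_succ]
        module

theorem cocycle_apply_delta_endpoint_general {X : Type} [DecidableEq X] (T : SimpleGraph X)
    (c : ℂ → X → X → (ell2 X →L[ℂ] ell2 X))
    (hedge : ∀ z ∈ Metric.ball (0 : ℂ) 1, ∀ u v : X, T.Adj u v →
      IsEdgeOp z u v (c z u v))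
    (hgeo : ∀ z ∈ Metric.ball (0 : ℂ) 1, ∀ u v : X, ∀ p : T.Walk u v,
      p.length = T.dist u v → c z u v = walkProd (c z) p)
    (x y : X) (n : ℕ) (hd : T.dist x y = n)
    (p : T.Walk x y) (hp : p.length = n) :
    ∀ z ∈ Metric.ball (0 : ℂ) 1,
      c z x y (delta y) =
        (z ^ n) • delta x +
          ∑ i ∈ Finset.Icc 1 n, (W z * z ^ (n - i)) • delta (p.getVert i) := by
  intro z hz
  have hgeodesic : p.length = T.dist x y := hp.trans hd.symm
  rw [hgeo z hz x y p hgeodesic,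
    walkProd_apply_delta_end z (c z) (hedge z hz) p (p.isPath_of_length_eq_dist hgeodesic), hp]

/-- Let `x, y` be vertices of the tree `T` with `d(x,y) = n ≥ 1` and let
`x = v₀, v₁, …, v_n = y` be the geodesic edge-path from `x` to `y`.  Then for every
`z ∈ 𝔻`,
`c_z(x,y)δ_y = wδ_{v_n} + wzδ_{v_{n−1}} + wz²δ_{v_{n−2}} + ⋯ + wz^{n−1}δ_{v_1} + z^nδ_{v_0}`. -/
theorem cocycle_apply_delta_endpoint {X : Type} [DecidableEq X] (T : SimpleGraph X)
    (hconn : T.Connected) (hacyc : T.IsAcyclic)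
    (c : ℂ → X → X → (ell2 X →L[ℂ] ell2 X))
    (hedge : ∀ z ∈ Metric.ball (0 : ℂ) 1, ∀ u v : X, T.Adj u v →
      IsEdgeOp z u v (c z u v))
    (hgeo : ∀ z ∈ Metric.ball (0 : ℂ) 1, ∀ u v : X, ∀ p : T.Walk u v,
      p.length = T.dist u v → c z u v = walkProd (c z) p)
    (x y : X) (n : ℕ) (hn : 1 ≤ n) (hd : T.dist x y = n)
    (p : T.Walk x y) (hp : p.length = n) :
    ∀ z ∈ Metric.ball (0 : ℂ) 1,
      c z x y (delta y) =
        (z ^ n) • delta x +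
          ∑ i ∈ Finset.Icc 1 n, (W z * z ^ (n - i)) • delta (p.getVert i) :=
  cocycle_apply_delta_endpoint_general T c hedge hgeo x y n hd p hp
end
end

section
/- Let x, y be vertices of the tree T with d(x,y) = n ≥ 2, let x = v_0, v_1, …, v_n = y be the geodesic edge-path from x to y, and let 1 ≤ i ≤ n−1. Then for every z ∈ 𝔻, c_z(x,y)δ_{v_i} = −zδ_{v_{i+1}} + w²δ_{v_i} + w²zδ_{v_{i−1}} + ⋯ + w²z^{n−i−1}δ_{v_1} + wz^{n−i}δ_{v_0}. -/
noncomputable section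

open scoped ComplexConjugate

namespace CocycleAux

open SimpleGraph Finset

variable {X : Type} [DecidableEq X] {T : SimpleGraph X}
  {c : ℂ → X → X → (ell2 X →L[ℂ] ell2 X)}

/-- A product of edge operators along a walk fixes `δ_v` for `v` not on the walk. -/
lemma walkProd_fix (z : ℂ) (hz : z ∈ Metric.ball (0 : ℂ) 1)
    (hedge : ∀ z ∈ Metric.ball (0 : ℂ) 1, ∀ u v : X, T.Adj u v → IsEdgeOp z u v (c z u v))
    {a b : X} (r : T.Walk a b) (v : X) (hv : v ∉ r.support) :
    walkProd (c z) r (delta v) = delta v := by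
  induction r with
  | nil => simp [walkProd]
  | cons h q ih =>
    rename_i u u' w
    rw [SimpleGraph.Walk.support_cons, List.mem_cons] at hv
    push_neg at hv
    have hvu' : v ≠ u' := fun hvv => hv.2 (hvv ▸ q.start_mem_support)
    have hfix := (hedge z hz u u' h).2.2 v hv.1 hvu'
    show (c z u u' * walkProd (c z) q) (delta v) = delta v
    rw [ContinuousLinearMap.mul_apply, ih hv.2, hfix]

/-- getVert of a walk is in its support. -/
lemma getVert_mem_support {a b : X} (r : T.Walk a b) (m : ℕ) (hm : m ≤ r.length) :
    r.getVert m ∈ r.support :=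
  SimpleGraph.Walk.mem_support_iff_exists_getVert.2 ⟨m, rfl, hm⟩

/-- The main computation, by induction on `i`. -/
lemma main (hconn : T.Connected) (z : ℂ) (hz : z ∈ Metric.ball (0 : ℂ) 1)
    (hedge : ∀ z ∈ Metric.ball (0 : ℂ) 1, ∀ u v : X, T.Adj u v → IsEdgeOp z u v (c z u v))
    (i : ℕ) (hi1 : 1 ≤ i) :
    ∀ {x y : X} (p : T.Walk x y), p.length = T.dist x y → i + 1 ≤ p.length →
      walkProd (c z) p (delta (p.getVert i)) =
        (-z) • delta (p.getVert (i + 1)) +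
          (∑ j ∈ Finset.Icc 1 i, (W z ^ 2 * z ^ (i - j)) • delta (p.getVert j)) +
          (W z * z ^ i) • delta x := by
  induction i, hi1 using Nat.le_induction with
  | base =>
    intro x y p hgeod hlen
    cases p with
    | nil => simp at hlen
    | cons h q =>
      rename_i s
      cases q with
      | nil => simp [SimpleGraph.Walk.length_cons] at hlen
      | cons h' r =>
        rename_i t
        have hpath : (SimpleGraph.Walk.cons h (SimpleGraph.Walk.cons h' r)).IsPath :=
          SimpleGraph.Walk.isPath_of_length_eq_dist _ hgeod
        rw [SimpleGraph.Walk.cons_isPath_iff] at hpath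
        have hq := hpath.1
        rw [SimpleGraph.Walk.cons_isPath_iff] at hq
        have hsr : s ∉ r.support := hq.2
        have hxq : x ∉ (SimpleGraph.Walk.cons h' r).support := hpath.2
        have hxs : x ≠ s := fun hh => hxq (hh ▸ (SimpleGraph.Walk.cons h' r).start_mem_support)
        have hxt : x ≠ t := by
          intro hh
          exact hxq (by
            rw [SimpleGraph.Walk.support_cons]
            exact List.mem_cons_of_mem _ (hh ▸ r.start_mem_support))
        have hst : s ≠ t := fun hh => hsr (hh ▸ r.start_mem_support)
        have E1 := hedge z hz x s h
        have E2 := hedge z hz s t h'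
        have hg1 : (SimpleGraph.Walk.cons h (SimpleGraph.Walk.cons h' r)).getVert 1 = s := by
          simp [SimpleGraph.Walk.getVert_cons_succ]
        have hg2 : (SimpleGraph.Walk.cons h (SimpleGraph.Walk.cons h' r)).getVert (1 + 1) = t := by
          rw [SimpleGraph.Walk.getVert_cons_succ, SimpleGraph.Walk.getVert_cons_succ]
          simp
        show (c z x s * ((c z s t) * walkProd (c z) r))
            (delta ((SimpleGraph.Walk.cons h (SimpleGraph.Walk.cons h' r)).getVert 1)) = _
        rw [hg1, hg2]
        rw [ContinuousLinearMap.mul_apply, ContinuousLinearMap.mul_apply,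
          walkProd_fix z hz hedge r s hsr, E2.1, map_sub, map_smul, map_smul,
          E1.2.1, E1.2.2 t hxt.symm hst.symm]
        rw [Finset.Icc_self, Finset.sum_singleton, hg1]
        simp only [Nat.sub_self, pow_zero, pow_one]
        module
  | succ k hk ih =>
    intro x y p hgeod hlen
    cases p with
    | nil => simp at hlen
    | cons h q =>
      rename_i s
      have hql : q.length = T.dist s y := by
        have h1 : T.dist s y ≤ q.length := SimpleGraph.dist_le q
        have h2 : T.dist x s ≤ 1 := by
          simpa using SimpleGraph.dist_le (SimpleGraph.Walk.cons h SimpleGraph.Walk.nil)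
        have h3 : T.dist x y ≤ T.dist x s + T.dist s y := hconn.dist_triangle
        have h4 : (SimpleGraph.Walk.cons h q).length = q.length + 1 :=
          SimpleGraph.Walk.length_cons h q
        omega
      have hpath : (SimpleGraph.Walk.cons h q).IsPath :=
        SimpleGraph.Walk.isPath_of_length_eq_dist _ hgeod
      rw [SimpleGraph.Walk.cons_isPath_iff] at hpath
      have hqpath : q.IsPath := hpath.1
      have hxq : x ∉ q.support := hpath.2
      have hlen' : k + 1 ≤ q.length := by
        simp only [SimpleGraph.Walk.length_cons] at hlen; omega
      have hxm : ∀ m, m ≤ q.length → x ≠ q.getVert m := by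
        intro m hm hh
        exact hxq (hh ▸ getVert_mem_support q m hm)
      have hsm : ∀ m, 1 ≤ m → m ≤ q.length → s ≠ q.getVert m := by
        intro m hm1 hm2
        cases q with
        | nil => simp at hm2; omega
        | cons h' r =>
          rw [SimpleGraph.Walk.cons_isPath_iff] at hqpath
          obtain ⟨m', rfl⟩ : ∃ m', m = m' + 1 := ⟨m - 1, by omega⟩
          rw [SimpleGraph.Walk.getVert_cons_succ]
          intro hh
          exact hqpath.2 (hh ▸ getVert_mem_support r m' (by
            simpa [SimpleGraph.Walk.length_cons] using hm2))
      have E1 := hedge z hz x s h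
      have IH := ih q hql hlen'
      show (c z x s * walkProd (c z) q)
          (delta ((SimpleGraph.Walk.cons h q).getVert (k + 1))) = _
      rw [SimpleGraph.Walk.getVert_cons_succ, ContinuousLinearMap.mul_apply, IH,
        map_add, map_add, map_smul, map_smul, map_sum]
      have hfix1 : (c z x s) (delta (q.getVert (k + 1))) = delta (q.getVert (k + 1)) :=
        E1.2.2 _ (hxm _ (by omega)).symm (hsm _ (by omega) (by omega)).symm
      have hfix : ∀ j ∈ Finset.Icc 1 k,
          (c z x s) ((W z ^ 2 * z ^ (k - j)) • delta (q.getVert j)) =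
            (W z ^ 2 * z ^ (k - j)) • delta (q.getVert j) := by
        intro j hj
        rw [Finset.mem_Icc] at hj
        rw [map_smul, E1.2.2 _ (hxm _ (by omega)).symm (hsm _ (by omega) (by omega)).symm]
      rw [Finset.sum_congr rfl hfix, hfix1, E1.2.1]
      have hgv : ∀ m : ℕ, (SimpleGraph.Walk.cons h q).getVert (m + 1) = q.getVert m := fun m =>
        SimpleGraph.Walk.getVert_cons_succ (n := m) q h
      have hins : Finset.Icc 1 (k + 1) = insert 1 (Finset.Icc 2 (k + 1)) := by
        ext m
        simp only [Finset.mem_Icc, Finset.mem_insert]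
        omega
      have hmap : Finset.Icc 2 (k + 1) = (Finset.Icc 1 k).map (addRightEmbedding 1) := by
        rw [Finset.map_add_right_Icc]
      have hsum : (∑ j ∈ Finset.Icc 1 (k + 1),
            (W z ^ 2 * z ^ (k + 1 - j)) • delta ((SimpleGraph.Walk.cons h q).getVert j)) =
          (W z ^ 2 * z ^ k) • delta s +
            ∑ j ∈ Finset.Icc 1 k, (W z ^ 2 * z ^ (k - j)) • delta (q.getVert j) := by
        rw [hins, Finset.sum_insert (by simp), hmap, Finset.sum_map]
        congr 1
        · rw [hgv 0]
          norm_num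
        · apply Finset.sum_congr rfl
          intro j hj
          simp only [addRightEmbedding_apply]
          rw [hgv j, Nat.succ_sub_succ]
      rw [hsum, hgv (k + 1)]
      have hs0 : (SimpleGraph.Walk.cons h q).getVert 1 = s := by
        simpa using hgv 0
      module

end CocycleAux

/-- Let `x, y` be vertices of the tree `T` with `d(x,y) = n ≥ 2`, let
`x = v₀, v₁, …, v_n = y` be the geodesic edge-path from `x` to `y`, and let
`1 ≤ i ≤ n − 1`.  Then for every `z ∈ 𝔻`,
`c_z(x,y)δ_{v_i} = −zδ_{v_{i+1}} + w²δ_{v_i} + w²zδ_{v_{i−1}} + ⋯ + w²z^{i−1}δ_{v_1}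
+ wz^{i}δ_{v_0}`
(the coefficient of `δ_{v_j}` for `1 ≤ j ≤ i` being `w²z^{i−j}`). -/
theorem cocycle_apply_delta_interior {X : Type} [DecidableEq X] (T : SimpleGraph X)
    (hconn : T.Connected) (hacyc : T.IsAcyclic)
    (c : ℂ → X → X → (ell2 X →L[ℂ] ell2 X))
    (hedge : ∀ z ∈ Metric.ball (0 : ℂ) 1, ∀ u v : X, T.Adj u v →
      IsEdgeOp z u v (c z u v))
    (hgeo : ∀ z ∈ Metric.ball (0 : ℂ) 1, ∀ u v : X, ∀ p : T.Walk u v,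
      p.length = T.dist u v → c z u v = walkProd (c z) p)
    (x y : X) (n : ℕ) (hn : 2 ≤ n) (hd : T.dist x y = n)
    (p : T.Walk x y) (hp : p.length = n)
    (i : ℕ) (hi1 : 1 ≤ i) (hi2 : i ≤ n - 1) :
    ∀ z ∈ Metric.ball (0 : ℂ) 1,
      c z x y (delta (p.getVert i)) =
        (-z) • delta (p.getVert (i + 1)) +
          (∑ j ∈ Finset.Icc 1 i, (W z ^ 2 * z ^ (i - j)) • delta (p.getVert j)) +
          (W z * z ^ i) • delta x := by
  intro z hz
  have hgd : p.length = T.dist x y := by rw [hp, hd]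
  rw [hgeo z hz x y p hgd]
  exact CocycleAux.main hconn z hz hedge i hi1 p hgd (by omega)
end
end

section
/- Let x, y be vertices of the tree T and for a, b ∈ X write c_{ab}(z) = ⟨c_z(x,y)δ_b, δ_a⟩. Then for all a, b ∈ X, either c_{ab}(z) = 0 for every z ∈ 𝔻, or there exist a sign ε ∈ {+1, −1} and a natural number ℓ ≤ 2 such that c_{ab}(z) = ε z^{d(a,b)} w^ℓ for every z ∈ 𝔻. -/
/-!
An edge operator `c_z(u,v)` changes only the coordinates at `u` and `v` of a vector, and (Dirac
functions being dense in `ℓ²`) by the same formula as on Dirac functions. Write `c_z(x,y)` as the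
product along the geodesic `x = v₀, …, vₙ = y`. If `b` is off the geodesic, every factor fixes
`δ_b`. Otherwise induct on the path, prepending edges `(u, v₁)`: the coefficient at the start
vertex `v₁` is `z^{d(v₁,b)} w^e` with `e ≤ 1`, and the coefficient at `u` is `0`. The new factor
turns these into `w` times it at `v₁` and `z` times it at `u`, where `d(u,b) = d(v₁,b) + 1` since
`T` is a tree, and leaves all other coefficients alone; so no coefficient ever carries more than
two factors `w`.
-/

noncomputable section

open scoped ComplexConjugate

section Dirac

variable {X : Type} [DecidableEq X]

theorem delta_apply (b a : X) : (delta b : ell2 X) a = if a = b then 1 else 0 := by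
  simp [delta, lp.single_apply, Pi.single_apply]

theorem inner_delta_left (a : X) (f : ell2 X) : (inner ℂ (delta a) f : ℂ) = f a := by
  simp [delta, lp.inner_single_left]

theorem single_eq_smul_delta (i : X) (t : ℂ) : lp.single 2 i t = t • (delta i : ell2 X) := by
  rw [delta, ← lp.single_smul, smul_eq_mul, mul_one]

theorem ContinuousLinearMap.ext_delta {φ ψ : ell2 X →L[ℂ] ℂ}
    (h : ∀ i, φ (delta i) = ψ (delta i)) : φ = ψ :=
  lp.ext_continuousLinearMap (by norm_num) fun i => ContinuousLinearMap.ext fun t => by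
    simp only [ContinuousLinearMap.comp_apply, lp.singleContinuousLinearMap_apply,
      single_eq_smul_delta, map_smul, h]

end Dirac

namespace IsEdgeOp

variable {X : Type} [DecidableEq X] {z : ℂ} {x y : X} {A : ell2 X →L[ℂ] ell2 X}

theorem apply_apply (hA : IsEdgeOp z x y A) (hxy : x ≠ y) (f : ell2 X) (a : X) :
    A f a = if a = x then W z * f x + z * f y
      else if a = y then W z * f y - z * f x else f a := by
  let ev : X → ell2 X →L[ℂ] ℂ := lp.evalCLM ℂ _ 2
  let φ : ell2 X →L[ℂ] ℂ :=
    if a = x then W z • ev x + z • ev y else if a = y then W z • ev y - z • ev x else ev a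
  suffices h : (ev a).comp A = φ by
    calc A f a = φ f := DFunLike.congr_fun h f
      _ = _ := by unfold φ; split_ifs <;> rfl
  refine ContinuousLinearMap.ext_delta fun i => ?_
  obtain ⟨hx, hy, hv⟩ := hA
  have hA_i : A (delta i) = if i = x then W z • delta x - z • delta y
      else if i = y then W z • delta y + z • delta x else delta i := by
    split_ifs with hix hiy
    exacts [hix ▸ hx, hiy ▸ hy, hv i hix hiy]
  simp only [ContinuousLinearMap.comp_apply, hA_i, φ]
  clear hx hy hv hA_i
  split_ifs <;> simp only [ev, lp.evalCLM, lp.coeFn_sub, lp.coeFn_add, lp.coeFn_smul, Pi.sub_apply,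
    Pi.add_apply, Pi.smul_apply, add_apply, sub_apply, smul_apply, LinearMap.mkContinuous_apply,
    lp.evalₗ_apply, delta_apply, smul_eq_mul]
  all_goals split_ifs <;> subst_vars <;> simp_all

end IsEdgeOp

namespace SimpleGraph

variable {V : Type} {G : SimpleGraph V}

theorem IsAcyclic.length_eq_dist_of_isPath (hG : G.IsAcyclic) {a b : V} {p : G.Walk a b}
    (hp : p.IsPath) : p.length = G.dist a b := by
  obtain ⟨q, hq, hql⟩ := p.reachable.exists_path_of_dist
  have hpq : p = q := congrArg Subtype.val ((hG.subsingleton_path a b).elim ⟨p, hp⟩ ⟨q, hq⟩)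
  rw [hpq, hql]

theorem IsAcyclic.dist_eq_dist_add_one [DecidableEq V] (hG : G.IsAcyclic) {u v w b : V}
    (h : G.Adj u v) {q : G.Walk v w} (hq : q.IsPath) (hu : u ∉ q.support)
    (hb : b ∈ q.support) : G.dist u b = G.dist v b + 1 := by
  have hr : (q.takeUntil b hb).IsPath := hq.takeUntil hb
  have hru : u ∉ (q.takeUntil b hb).support :=
    fun hx => hu (q.support_takeUntil_subset_support hb hx)
  rw [← hG.length_eq_dist_of_isPath (hr.cons hru (h := h)), ← hG.length_eq_dist_of_isPath hr,
    Walk.length_cons]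

end SimpleGraph

section WalkProd

open SimpleGraph

variable {X : Type} {T : SimpleGraph X}

theorem walkProd_cons {E : Type} [Monoid E] (f : X → X → E) {u v w : X} (h : T.Adj u v)
    (p : T.Walk v w) : walkProd f (Walk.cons h p) = f u v * walkProd f p :=
  rfl

variable [DecidableEq X] {z : ℂ} {C : X → X → ell2 X →L[ℂ] ell2 X}

theorem walkProd_apply_apply_of_not_mem_support
    (hC : ∀ u v, T.Adj u v → IsEdgeOp z u v (C u v)) {u v : X} (q : T.Walk u v)
    (f : ell2 X) {a : X} (ha : a ∉ q.support) : walkProd C q f a = f a := by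
  induction q with
  | nil => rfl
  | @cons u v w h q ih =>
    rw [Walk.support_cons, List.mem_cons, not_or] at ha
    have hav : a ≠ v := fun hav => ha.2 (hav ▸ q.start_mem_support)
    rw [walkProd_cons, mul_apply_eq_comp, (hC u v h).apply_apply h.ne,
      if_neg ha.1, if_neg hav, ih ha.2]

theorem walkProd_apply_delta_of_not_mem_support
    (hC : ∀ u v, T.Adj u v → IsEdgeOp z u v (C u v)) {u v : X} (q : T.Walk u v)
    {b : X} (hb : b ∉ q.support) : walkProd C q (delta b) = delta b := by
  induction q with
  | nil => rfl
  | @cons u v w h q ih =>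
    rw [Walk.support_cons, List.mem_cons, not_or] at hb
    have hbv : b ≠ v := fun hbv => hb.2 (hbv ▸ q.start_mem_support)
    rw [walkProd_cons, mul_apply_eq_comp, ih hb.2, (hC u v h).2.2 b hb.1 hbv]

theorem walkProd_apply_delta_apply_start (hT : T.IsAcyclic)
    (hC : ∀ u v, T.Adj u v → IsEdgeOp z u v (C u v)) {u v : X} (q : T.Walk u v)
    (hq : q.IsPath) {b : X} (hb : b ∈ q.support) :
    walkProd C q (delta b) u = z ^ T.dist u b * W z ^ (if b = v then 0 else 1) := by
  induction q with
  | nil =>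
    rw [Walk.support_nil, List.mem_singleton] at hb
    subst hb
    simp [walkProd, delta_apply]
  | @cons u v w h q ih =>
    obtain ⟨hq', hu⟩ := (Walk.cons_isPath_iff h q).mp hq
    rw [walkProd_cons, mul_apply_eq_comp, (hC u v h).apply_apply h.ne, if_pos rfl]
    rcases List.mem_cons.mp (Walk.support_cons h q ▸ hb) with rfl | hbq
    · have hbw : b ≠ w := fun hbw => hu (hbw ▸ q.end_mem_support)
      simp [walkProd_apply_delta_of_not_mem_support hC q hu, delta_apply, h.ne.symm, hbw]
    · have hub : u ≠ b := fun hub => hu (hub ▸ hbq)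
      rw [walkProd_apply_apply_of_not_mem_support hC q _ hu, ih hq' hbq, delta_apply, if_neg hub,
        hT.dist_eq_dist_add_one h hq' hu hbq]
      ring

end WalkProd

def IsZeroOrSignedMonomialOn (s : Set ℂ) (F : ℂ → ℂ) (d : ℕ) : Prop :=
  (∀ z ∈ s, F z = 0) ∨
    ∃ ε : ℂ, (ε = 1 ∨ ε = -1) ∧ ∃ l : ℕ, l ≤ 2 ∧ ∀ z ∈ s, F z = ε * z ^ d * W z ^ l

theorem IsZeroOrSignedMonomialOn.congr {s : Set ℂ} {F G : ℂ → ℂ} {d : ℕ}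
    (hG : IsZeroOrSignedMonomialOn s G d) (hFG : ∀ z ∈ s, F z = G z) :
    IsZeroOrSignedMonomialOn s F d := by
  rcases hG with hG | ⟨ε, hε, l, hl, hG⟩
  · exact Or.inl fun z hz => (hFG z hz).trans (hG z hz)
  · exact Or.inr ⟨ε, hε, l, hl, fun z hz => (hFG z hz).trans (hG z hz)⟩

section WalkProdCoefficients

open SimpleGraph

variable {X : Type} [DecidableEq X] {T : SimpleGraph X} {s : Set ℂ}
  {c : ℂ → X → X → ell2 X →L[ℂ] ell2 X}

theorem isZeroOrSignedMonomialOn_delta_apply (b a : X) :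
    IsZeroOrSignedMonomialOn s (fun _ => (delta b : ell2 X) a) (T.dist a b) := by
  by_cases hab : a = b
  · subst hab
    exact Or.inr ⟨1, Or.inl rfl, 0, by norm_num, fun z _ => by simp [delta_apply]⟩
  · exact Or.inl fun z _ => by simp [delta_apply, hab]

theorem isZeroOrSignedMonomialOn_walkProd_cons_delta_start {b v w : X} (h : T.Adj b v)
    (hc : ∀ z ∈ s, ∀ u v, T.Adj u v → IsEdgeOp z u v (c z u v)) (q : T.Walk v w)
    (hb : b ∉ q.support) (a : X) :
    IsZeroOrSignedMonomialOn s (fun z => walkProd (c z) (Walk.cons h q) (delta b) a)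
      (T.dist a b) := by
  have hval : ∀ z ∈ s, walkProd (c z) (Walk.cons h q) (delta b) a =
      if a = b then W z else if a = v then -z else 0 := fun z hz => by
    rw [walkProd_cons, mul_apply_eq_comp,
      walkProd_apply_delta_of_not_mem_support (hc z hz) q hb, (hc z hz b v h).apply_apply h.ne]
    split_ifs <;> simp_all [delta_apply, h.ne.symm]
  split_ifs at hval with hab hav
  · subst hab
    exact Or.inr ⟨1, Or.inl rfl, 1, by norm_num, fun z hz => (hval z hz).trans (by simp)⟩
  · subst hav
    refine Or.inr ⟨-1, Or.inr rfl, 0, by norm_num, fun z hz => (hval z hz).trans ?_⟩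
    rw [dist_comm, dist_eq_one_iff_adj.mpr h]
    ring
  · exact Or.inl hval

theorem isZeroOrSignedMonomialOn_walkProd_of_mem_support (hT : T.IsAcyclic)
    (hc : ∀ z ∈ s, ∀ u v, T.Adj u v → IsEdgeOp z u v (c z u v)) {u v : X} (q : T.Walk u v)
    (hq : q.IsPath) {b : X} (hb : b ∈ q.support) (a : X) :
    IsZeroOrSignedMonomialOn s (fun z => walkProd (c z) q (delta b) a) (T.dist a b) := by
  induction q with
  | nil => exact (isZeroOrSignedMonomialOn_delta_apply b a).congr fun _ _ => rfl
  | @cons u v w h q ih =>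
    obtain ⟨hq', hu⟩ := (Walk.cons_isPath_iff h q).mp hq
    rcases List.mem_cons.mp (Walk.support_cons h q ▸ hb) with rfl | hbq
    · exact isZeroOrSignedMonomialOn_walkProd_cons_delta_start h hc q hu a
    have hub : u ≠ b := fun hub => hu (hub ▸ hbq)
    by_cases hau : a = u
    · subst hau
      exact Or.inr ⟨1, Or.inl rfl, if b = w then 0 else 1, by split_ifs <;> norm_num,
        fun z hz => (walkProd_apply_delta_apply_start hT (hc z hz) _ hq hb).trans (by ring)⟩
    have hstep : ∀ z ∈ s, walkProd (c z) (Walk.cons h q) (delta b) a =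
        if a = v then W z * walkProd (c z) q (delta b) v else walkProd (c z) q (delta b) a :=
      fun z hz => by
        rw [walkProd_cons, mul_apply_eq_comp, (hc z hz u v h).apply_apply h.ne, if_neg hau,
          walkProd_apply_apply_of_not_mem_support (hc z hz) q _ hu, delta_apply, if_neg hub,
          mul_zero, sub_zero]
    split_ifs at hstep with hav
    · subst hav
      refine Or.inr ⟨1, Or.inl rfl, (if b = w then 0 else 1) + 1, by split_ifs <;> norm_num,
        fun z hz => (hstep z hz).trans ?_⟩
      rw [walkProd_apply_delta_apply_start hT (hc z hz) q hq' hbq]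
      ring
    · exact (ih hq' hbq).congr hstep

theorem isZeroOrSignedMonomialOn_walkProd (hT : T.IsAcyclic)
    (hc : ∀ z ∈ s, ∀ u v, T.Adj u v → IsEdgeOp z u v (c z u v)) {u v : X} (q : T.Walk u v)
    (hq : q.IsPath) (b a : X) :
    IsZeroOrSignedMonomialOn s (fun z => walkProd (c z) q (delta b) a) (T.dist a b) := by
  by_cases hb : b ∈ q.support
  · exact isZeroOrSignedMonomialOn_walkProd_of_mem_support hT hc q hq hb a
  · exact (isZeroOrSignedMonomialOn_delta_apply b a).congr fun z hz => by
      rw [walkProd_apply_delta_of_not_mem_support (hc z hz) q hb]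

end WalkProdCoefficients

/-- Let `x, y` be vertices of the tree `T` and for `a, b ∈ X` write
`c_{ab}(z) = ⟨c_z(x,y)δ_b, δ_a⟩`.  Then for all `a, b ∈ X`, either `c_{ab}(z) = 0` for
every `z ∈ 𝔻`, or there exist a sign `ε ∈ {+1, −1}` and a natural number `ℓ ≤ 2` such
that `c_{ab}(z) = ε z^{d(a,b)} w^ℓ` for every `z ∈ 𝔻`. -/
theorem matrix_coefficient_form {X : Type} [DecidableEq X] (T : SimpleGraph X)
    (hconn : T.Connected) (hacyc : T.IsAcyclic)
    (c : ℂ → X → X → (ell2 X →L[ℂ] ell2 X))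
    (hedge : ∀ z ∈ Metric.ball (0 : ℂ) 1, ∀ u v : X, T.Adj u v →
      IsEdgeOp z u v (c z u v))
    (hgeo : ∀ z ∈ Metric.ball (0 : ℂ) 1, ∀ u v : X, ∀ p : T.Walk u v,
      p.length = T.dist u v → c z u v = walkProd (c z) p)
    (x y : X) (a b : X) :
    (∀ z ∈ Metric.ball (0 : ℂ) 1, (inner ℂ (delta a) (c z x y (delta b)) : ℂ) = 0) ∨
    (∃ ε : ℂ, (ε = 1 ∨ ε = -1) ∧ ∃ l : ℕ, l ≤ 2 ∧
      ∀ z ∈ Metric.ball (0 : ℂ) 1,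
        (inner ℂ (delta a) (c z x y (delta b)) : ℂ) = ε * z ^ (T.dist a b) * W z ^ l) := by
  obtain ⟨p, hp, hpl⟩ := hconn.exists_path_of_dist x y
  exact (isZeroOrSignedMonomialOn_walkProd hacyc hedge p hp b a).congr fun z hz => by
    rw [inner_delta_left, hgeo z hz x y p hpl]
end
end

section
/- For every z ∈ 𝔻 the representation π_z is uniformly bounded: ‖π_z(g)‖ ≤ 4(1 − |z|)^{−1} for every g ∈ G. In particular, for every compact subset K ⊆ 𝔻, sup{ ‖π_z(g)‖ : g ∈ G, z ∈ K } < ∞. -/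
/-!
Along a geodesic `v₀, …, v_n` from `x` to `g·x`, the operator `c_z(x, g·x)` fixes every `δ_v` off
the path and acts on the span of `δ_{v₀}, …, δ_{v_n}` by an explicit matrix. Peeling off the first
edge shows that its entries are `0` below the subdiagonal, `-z` on it, and on or above the
diagonal products of at most two factors `w` with `z^(k-m)`. As `|w|² = |1 - z²| ≤ 2`, they are
dominated by `2|z|^(k-m)` above the diagonal plus `1` on the subdiagonal, so the Schur test bounds
the operator by `1 + 2/(1 - |z|)`, independently of the length of the path. The permutation
operator `π(g)` has norm at most `1`, hence `‖π_z(g)‖ ≤ 1 + 2/(1 - |z|) ≤ 4/(1 - |z|)`.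
-/

noncomputable section

open scoped ComplexConjugate

theorem schur_test {ι : Type*} (s : Finset ι) (K : ι → ι → ℂ)
    (κ : ι → ι → ℝ) (hK : ∀ m ∈ s, ∀ k ∈ s, ‖K m k‖ ≤ κ m k) {A B : ℝ}
    (hrow : ∀ m ∈ s, ∑ k ∈ s, κ m k ≤ A) (hcol : ∀ k ∈ s, ∑ m ∈ s, κ m k ≤ B) (a : ι → ℂ) :
    ∑ m ∈ s, ‖∑ k ∈ s, K m k * a k‖ ^ 2 ≤ A * B * ∑ k ∈ s, ‖a k‖ ^ 2 := by
  rcases s.eq_empty_or_nonempty with rfl | ⟨m₀, hm₀⟩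
  · simp
  have hκ : ∀ m ∈ s, ∀ k ∈ s, 0 ≤ κ m k := fun m hm k hk => (norm_nonneg _).trans (hK m hm k hk)
  have hA : 0 ≤ A := (Finset.sum_nonneg (hκ m₀ hm₀)).trans (hrow m₀ hm₀)
  have hrow_sq : ∀ m ∈ s,
      ‖∑ k ∈ s, K m k * a k‖ ^ 2 ≤ A * ∑ k ∈ s, κ m k * ‖a k‖ ^ 2 := fun m hm => calc
    ‖∑ k ∈ s, K m k * a k‖ ^ 2 ≤ (∑ k ∈ s, κ m k * ‖a k‖) ^ 2 := by
      gcongr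
      refine (norm_sum_le _ _).trans (Finset.sum_le_sum fun k hk => ?_)
      rw [norm_mul]
      gcongr
      exact hK m hm k hk
    _ ≤ (∑ k ∈ s, κ m k) * ∑ k ∈ s, κ m k * ‖a k‖ ^ 2 :=
      Finset.sum_sq_le_sum_mul_sum_of_sq_le_mul s (hκ m hm)
        (fun k hk => mul_nonneg (hκ m hm k hk) (sq_nonneg _)) fun k _ => le_of_eq (by ring)
    _ ≤ A * ∑ k ∈ s, κ m k * ‖a k‖ ^ 2 :=
      mul_le_mul_of_nonneg_right (hrow m hm)
        (Finset.sum_nonneg fun k hk => mul_nonneg (hκ m hm k hk) (sq_nonneg _))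
  calc ∑ m ∈ s, ‖∑ k ∈ s, K m k * a k‖ ^ 2
      ≤ ∑ m ∈ s, A * ∑ k ∈ s, κ m k * ‖a k‖ ^ 2 := Finset.sum_le_sum hrow_sq
    _ = A * ∑ k ∈ s, (∑ m ∈ s, κ m k) * ‖a k‖ ^ 2 := by
      rw [← Finset.mul_sum, Finset.sum_comm]
      simp only [Finset.sum_mul]
    _ ≤ A * ∑ k ∈ s, B * ‖a k‖ ^ 2 := by
      gcongr with k hk
      exact hcol k hk
    _ = A * B * ∑ k ∈ s, ‖a k‖ ^ 2 := by rw [← Finset.mul_sum, mul_assoc]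

lemma sum_pow_le_of_injOn {ι : Type*} {s : Finset ι} {e : ι → ℕ} (he : Set.InjOn e s) {r : ℝ}
    (hr0 : 0 ≤ r) (hr1 : r < 1) : ∑ i ∈ s, r ^ e i ≤ (1 - r)⁻¹ := by
  rw [← Finset.sum_image he, ← tsum_geometric_of_lt_one hr0 hr1]
  exact (summable_geometric_of_lt_one hr0 hr1).sum_le_tsum _ fun i _ => pow_nonneg hr0 i

namespace Ell2

variable {X : Type} [DecidableEq X]

lemma delta_apply (v x : X) : delta v x = if x = v then 1 else 0 := by
  simp [delta, lp.single_apply, Pi.single_apply]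

lemma inner_delta_right (f : ell2 X) (v : X) : inner ℂ f (delta v) = conj (f v) := by
  rw [delta, lp.inner_single_right]
  simp

lemma hasSum_apply_smul_delta (f : ell2 X) : HasSum (fun v => f v • delta v) f := by
  simpa [delta, ← lp.single_smul] using
    lp.hasSum_single (E := fun _ : X => ℂ) (p := 2) (by norm_num) f

lemma norm_sq_sum_smul_delta {ι : Type*} (s : Finset ι) {v : ι → X} (hv : Set.InjOn v s)
    (a : ι → ℂ) : ‖∑ i ∈ s, a i • delta (v i)‖ ^ 2 = ∑ i ∈ s, ‖a i‖ ^ 2 := by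
  classical
  rcases isEmpty_or_nonempty ι with hι | hι
  · simp [Finset.eq_empty_of_isEmpty s]
  set b : X → ℂ := fun x => a (Function.invFunOn v s x)
  have hb : ∀ i ∈ s, b (v i) = a i := fun i hi => by
    simp only [b, hv.leftInvOn_invFunOn hi]
  have h := lp.norm_sum_single (E := fun _ : X => ℂ) (p := 2) (by norm_num) b (s.image v)
  simp only [ENNReal.toReal_ofNat, Real.rpow_ofNat, Finset.sum_image hv] at h
  rw [Finset.sum_congr rfl fun i hi => by rw [← hb i hi, delta, ← lp.single_smul, smul_eq_mul,
    mul_one], h]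
  exact Finset.sum_congr rfl fun i hi => by rw [hb i hi]

omit [DecidableEq X] in
lemma sum_norm_apply_sq_le (f : ell2 X) (s : Finset X) : ∑ x ∈ s, ‖f x‖ ^ 2 ≤ ‖f‖ ^ 2 := by
  simpa using lp.sum_rpow_le_norm_rpow (p := 2) (by norm_num) f s

lemma map_eq_self_of_map_delta (P : ell2 X →L[ℂ] ell2 X) (f : ell2 X)
    (hP : ∀ x, f x ≠ 0 → P (delta x) = delta x) : P f = f := by
  have hPf := (hasSum_apply_smul_delta f).mapL P
  refine hPf.unique ?_
  convert hasSum_apply_smul_delta f using 2 with x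
  by_cases hx : f x = 0
  · simp [hx]
  · simp [hP x hx]

lemma inner_sum_smul_delta_eq_zero {ι : Type*} (s : Finset ι) (v : ι → X) (a : ι → ℂ)
    {h : ell2 X} (hh : ∀ i ∈ s, h (v i) = 0) :
    inner ℂ h (∑ i ∈ s, a i • delta (v i)) = 0 := by
  simp only [inner_sum, inner_smul_right, inner_delta_right]
  exact Finset.sum_eq_zero fun i hi => by simp [hh i hi]

lemma sum_smul_delta_apply {ι : Type*} (s : Finset ι) {v : ι → X} (hv : Set.InjOn v s)
    (a : ι → ℂ) {k : ι} (hk : k ∈ s) : (∑ i ∈ s, a i • delta (v i)) (v k) = a k := by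
  rw [lp.coeFn_sum, Finset.sum_apply, Finset.sum_eq_single k]
  · simp [delta_apply]
  · intro i hi hik
    have hvik : v k ≠ v i := fun h => hik (hv hk hi h).symm
    simp [delta_apply, hvik]
  · exact absurd hk

lemma opNorm_le_of_matrix_block {ι : Type*} (P : ell2 X →L[ℂ] ell2 X) (s : Finset ι)
    {v : ι → X} (hv : Set.InjOn v s) (hfix : ∀ x, (∀ i ∈ s, v i ≠ x) → P (delta x) = delta x)
    (E : ι → ι → ℂ) (hE : ∀ k ∈ s, P (delta (v k)) = ∑ m ∈ s, E m k • delta (v m))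
    {C : ℝ} (hC : 1 ≤ C)
    (hEC : ∀ a : ι → ℂ, ∑ m ∈ s, ‖∑ k ∈ s, E m k * a k‖ ^ 2 ≤ C ^ 2 * ∑ k ∈ s, ‖a k‖ ^ 2) :
    ‖P‖ ≤ C := by
  refine P.opNorm_le_bound (by linarith) fun f => ?_
  set a : ι → ℂ := fun k => f (v k)
  set g := ∑ k ∈ s, a k • delta (v k)
  set h := f - g
  have hh : ∀ k ∈ s, h (v k) = 0 := fun k hk => by
    rw [lp.coeFn_sub, Pi.sub_apply, sum_smul_delta_apply s hv a hk, sub_self]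
  have hPh : P h = h := map_eq_self_of_map_delta P h fun x hx =>
    hfix x fun i hi hix => hx (hix ▸ hh i hi)
  have hPg : P g = ∑ m ∈ s, (∑ k ∈ s, E m k * a k) • delta (v m) := by
    simp only [g, map_sum, map_smul, Finset.sum_smul, mul_smul]
    rw [Finset.sum_comm]
    refine Finset.sum_congr rfl fun k hk => ?_
    rw [hE k hk, Finset.smul_sum]
    exact Finset.sum_congr rfl fun m _ => smul_comm _ _ _
  have hf : f = h + g := by simp [h]
  have hnf : ‖f‖ ^ 2 = ‖h‖ ^ 2 + ∑ k ∈ s, ‖a k‖ ^ 2 := by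
    rw [← norm_sq_sum_smul_delta s hv, hf]
    simpa [sq] using norm_add_sq_eq_norm_sq_add_norm_sq_of_inner_eq_zero _ _
      (inner_sum_smul_delta_eq_zero s v a hh)
  have hnPf : ‖P f‖ ^ 2 = ‖h‖ ^ 2 + ∑ m ∈ s, ‖∑ k ∈ s, E m k * a k‖ ^ 2 := by
    rw [← norm_sq_sum_smul_delta s hv, hf, map_add, hPh, hPg]
    simpa [sq] using norm_add_sq_eq_norm_sq_add_norm_sq_of_inner_eq_zero _ _
      (inner_sum_smul_delta_eq_zero s v _ hh)
  have hsq : ‖P f‖ ^ 2 ≤ (C * ‖f‖) ^ 2 := by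
    rw [hnPf, mul_pow, hnf]
    nlinarith [hEC a, sq_nonneg ‖h‖, one_le_pow₀ (n := 2) hC]
  exact (pow_le_pow_iff_left₀ (norm_nonneg _) (by positivity) two_ne_zero).mp hsq

lemma opNorm_le_one_of_map_delta (U : ell2 X →L[ℂ] ell2 X) {σ : X → X}
    (hσ : Function.Injective σ) (hU : ∀ v, U (delta v) = delta (σ v)) : ‖U‖ ≤ 1 := by
  refine U.opNorm_le_bound zero_le_one fun f => ?_
  have hUf := (hasSum_apply_smul_delta f).mapL U
  simp only [map_smul, hU] at hUf
  refine le_of_tendsto hUf.norm (Filter.Eventually.of_forall fun s => ?_)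
  rw [one_mul, ← pow_le_pow_iff_left₀ (norm_nonneg _) (norm_nonneg _) two_ne_zero,
    norm_sq_sum_smul_delta s hσ.injOn]
  exact sum_norm_apply_sq_le f s

end Ell2

def pathKernel (r : ℝ) (m k : ℕ) : ℝ :=
  (if m ≤ k then 2 * r ^ (k - m) else 0) + if m = k + 1 then 1 else 0

lemma pathKernel_nonneg {r : ℝ} (hr : 0 ≤ r) (m k : ℕ) : 0 ≤ pathKernel r m k := by
  unfold pathKernel
  positivity

lemma pathKernel_of_le (r : ℝ) {m k : ℕ} (h : m ≤ k) : pathKernel r m k = 2 * r ^ (k - m) := by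
  simp [pathKernel, h, show m ≠ k + 1 by omega]

lemma pathKernel_succ_self (r : ℝ) (k : ℕ) : pathKernel r (k + 1) k = 1 := by
  simp [pathKernel]

lemma pathKernel_succ_succ (r : ℝ) (m k : ℕ) : pathKernel r (m + 1) (k + 1) = pathKernel r m k := by
  simp [pathKernel]

lemma sum_pathKernel_left_le {r : ℝ} (hr0 : 0 ≤ r) (hr1 : r < 1) (s : Finset ℕ) (m : ℕ) :
    ∑ k ∈ s, pathKernel r m k ≤ 2 * (1 - r)⁻¹ + 1 := by
  have hgeom : ∑ k ∈ s with m ≤ k, r ^ (k - m) ≤ (1 - r)⁻¹ :=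
    sum_pow_le_of_injOn (fun i hi j hj h => by
      simp only [Finset.coe_filter, Set.mem_ofPred_eq] at hi hj h; omega) hr0 hr1
  have hsub : ((s.filter (m = · + 1)).card : ℝ) ≤ 1 := by
    exact_mod_cast Finset.card_le_one.mpr fun i hi j hj => by
      simp only [Finset.mem_filter] at hi hj; omega
  simp only [pathKernel, Finset.sum_add_distrib, ← Finset.sum_filter, ← Finset.mul_sum,
    Finset.sum_const, nsmul_eq_mul, mul_one]
  linarith

lemma sum_pathKernel_right_le {r : ℝ} (hr0 : 0 ≤ r) (hr1 : r < 1) (s : Finset ℕ) (k : ℕ) :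
    ∑ m ∈ s, pathKernel r m k ≤ 2 * (1 - r)⁻¹ + 1 := by
  have hgeom : ∑ m ∈ s with m ≤ k, r ^ (k - m) ≤ (1 - r)⁻¹ :=
    sum_pow_le_of_injOn (fun i hi j hj h => by
      simp only [Finset.coe_filter, Set.mem_ofPred_eq] at hi hj h; omega) hr0 hr1
  have hsub : ((s.filter (· = k + 1)).card : ℝ) ≤ 1 := by
    exact_mod_cast Finset.card_le_one.mpr fun i hi j hj => by
      simp only [Finset.mem_filter] at hi hj; omega
  simp only [pathKernel, Finset.sum_add_distrib, ← Finset.sum_filter, ← Finset.mul_sum,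
    Finset.sum_const, nsmul_eq_mul, mul_one]
  linarith

/-- `pathEntry z n m k` is the coefficient of `δ_{v_m}` in `c_z(v₀,v₁) ⋯ c_z(v_{n-1},v_n) δ_{v_k}`
for a path `v₀, …, v_n`; the recursion peels off the first edge. -/
def pathEntry (z : ℂ) : ℕ → ℕ → ℕ → ℂ
  | 0, 0, 0 => 1
  | 0, _, _ => 0
  | _ + 1, 0, 0 => W z
  | _ + 1, 1, 0 => -z
  | _ + 1, _ + 2, 0 => 0
  | n + 1, 0, k + 1 => z * pathEntry z n 0 k
  | n + 1, 1, k + 1 => W z * pathEntry z n 0 k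
  | n + 1, m + 2, k + 1 => pathEntry z n (m + 1) k

lemma norm_W_le_sqrt_two {z : ℂ} (hz : ‖z‖ ≤ 1) : ‖W z‖ ≤ √2 := by
  have hle : ‖1 - z ^ 2‖ ≤ 2 := (norm_sub_le _ _).trans (by
    rw [norm_one, norm_pow]; nlinarith [norm_nonneg z])
  rw [W, show (1 : ℂ) / 2 = ((1 / 2 : ℝ) : ℂ) by norm_num, Complex.norm_cpow_real,
    Real.sqrt_eq_rpow]
  gcongr

lemma norm_pathEntry_zero_le {z : ℂ} (hz : ‖z‖ ≤ 1) (n k : ℕ) :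
    ‖pathEntry z n 0 k‖ ≤ √2 * ‖z‖ ^ k := by
  induction n generalizing k with
  | zero => cases k <;> simp [pathEntry]
  | succ n ih =>
    cases k with
    | zero => simpa [pathEntry] using norm_W_le_sqrt_two hz
    | succ k =>
      rw [pathEntry, norm_mul, pow_succ']
      nlinarith [ih k, norm_nonneg z]

lemma norm_pathEntry_le {z : ℂ} (hz : ‖z‖ ≤ 1) (n m k : ℕ) :
    ‖pathEntry z n m k‖ ≤ pathKernel ‖z‖ m k := by
  have hW := norm_W_le_sqrt_two hz
  have hsqrt : √2 * √2 = 2 := Real.mul_self_sqrt zero_le_two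
  have hsqrt_le : √2 ≤ 2 := by nlinarith [Real.sqrt_nonneg 2]
  have hnonneg := pathKernel_nonneg (norm_nonneg z)
  induction n generalizing m k with
  | zero =>
    rcases m with _ | m <;> rcases k with _ | k
    · simp [pathEntry, pathKernel]
    all_goals simpa [pathEntry] using hnonneg _ _
  | succ n ih =>
    rcases m with _ | _ | m <;> rcases k with _ | k
    · rw [pathEntry, pathKernel_of_le _ le_rfl, Nat.sub_self, pow_zero, mul_one]
      exact hW.trans hsqrt_le
    · rw [pathEntry, pathKernel_of_le _ (Nat.zero_le _), Nat.sub_zero, norm_mul]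
      calc ‖z‖ * ‖pathEntry z n 0 k‖ ≤ ‖z‖ * (√2 * ‖z‖ ^ k) := by
            gcongr
            exact norm_pathEntry_zero_le hz n k
        _ = √2 * ‖z‖ ^ (k + 1) := by ring
        _ ≤ 2 * ‖z‖ ^ (k + 1) := by gcongr
    · rw [pathEntry, pathKernel_succ_self, norm_neg]
      exact hz
    · rw [pathEntry, pathKernel_of_le _ (by omega), norm_mul, Nat.add_sub_cancel]
      calc ‖W z‖ * ‖pathEntry z n 0 k‖ ≤ √2 * (√2 * ‖z‖ ^ k) := by
            gcongr
            exact norm_pathEntry_zero_le hz n k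
        _ = 2 * ‖z‖ ^ k := by rw [← mul_assoc, hsqrt]
    · rw [pathEntry, norm_zero]
      exact hnonneg _ _
    · rw [pathEntry, pathKernel_succ_succ]
      exact ih (m + 1) k

section PathProduct

open SimpleGraph

variable {X : Type} [DecidableEq X] {T : SimpleGraph X} {z : ℂ}
  {c : X → X → (ell2 X →L[ℂ] ell2 X)}

lemma walkProd_apply_delta_of_notMem_support
    (hedge : ∀ u v, T.Adj u v → IsEdgeOp z u v (c u v)) {a b : X} (p : T.Walk a b) {x : X}
    (hx : x ∉ p.support) : walkProd c p (delta x) = delta x := by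
  induction p with
  | nil => rfl
  | cons h q ih =>
    rw [Walk.support_cons, List.mem_cons, not_or] at hx
    rw [walkProd, mul_apply_eq_comp, ih hx.2]
    exact (hedge _ _ h).2.2 x hx.1 fun hxv => hx.2 (hxv ▸ q.start_mem_support)

lemma walkProd_apply_delta_getVert (hedge : ∀ u v, T.Adj u v → IsEdgeOp z u v (c u v))
    {a b : X} (p : T.Walk a b) (hp : p.IsPath) {k : ℕ} (hk : k ≤ p.length) :
    walkProd c p (delta (p.getVert k)) =
      ∑ m ∈ Finset.range (p.length + 1), pathEntry z p.length m k • delta (p.getVert m) := by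
  induction p generalizing k with
  | nil =>
    obtain rfl : k = 0 := Nat.le_zero.mp hk
    simp [walkProd, pathEntry]
  | cons h q ih =>
    rename_i u v w
    rw [Walk.cons_isPath_iff] at hp
    obtain ⟨hq, hu⟩ := hp
    obtain ⟨hcu, hcv, hcfix⟩ := hedge u v h
    rw [Walk.length_cons] at hk ⊢
    simp only [Finset.sum_range_succ' _ (q.length + 1), Finset.sum_range_succ' _ q.length,
      Walk.getVert_cons_succ, Walk.getVert_zero, walkProd, mul_apply_eq_comp]
    rcases k with _ | k
    · rw [Walk.getVert_zero, walkProd_apply_delta_of_notMem_support hedge q hu, hcu]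
      simp only [pathEntry, neg_smul, zero_smul, Finset.sum_const_zero, zero_add]
      abel
    · have hfix : ∀ m < q.length, c u v (delta (q.getVert (m + 1))) = delta (q.getVert (m + 1)) :=
        fun m hm => hcfix _ (fun hmu => hu (hmu ▸ q.getVert_mem_support _)) fun hmv => by
          have := hq.getVert_injOn (by simp only [Set.mem_ofPred_eq]; omega)
            (by simp only [Set.mem_ofPred_eq]; omega) (hmv.trans q.getVert_zero.symm)
          omega
      rw [Walk.getVert_cons_succ, ih hq (by omega), Finset.sum_range_succ', map_add, map_sum]
      simp only [map_smul, Walk.getVert_zero, hcv, pathEntry]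
      rw [Finset.sum_congr rfl fun m hm => by rw [hfix m (Finset.mem_range.mp hm)]]
      module

lemma norm_walkProd_le (hz : ‖z‖ < 1) (hedge : ∀ u v, T.Adj u v → IsEdgeOp z u v (c u v))
    {a b : X} (p : T.Walk a b) (hp : p.IsPath) : ‖walkProd c p‖ ≤ 2 * (1 - ‖z‖)⁻¹ + 1 := by
  have hr0 := norm_nonneg z
  refine Ell2.opNorm_le_of_matrix_block (walkProd c p) (Finset.range (p.length + 1))
    (v := p.getVert) ?_ ?_ (pathEntry z p.length) ?_ ?_ fun a => ?_
  · intro i hi j hj hij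
    simp only [Finset.coe_range, Set.mem_Iio] at hi hj
    exact hp.getVert_injOn (by simp only [Set.mem_ofPred_eq]; omega)
      (by simp only [Set.mem_ofPred_eq]; omega) hij
  · intro x hx
    refine walkProd_apply_delta_of_notMem_support hedge p fun hxp => ?_
    obtain ⟨i, rfl, hi⟩ := Walk.mem_support_iff_exists_getVert.mp hxp
    exact hx i (Finset.mem_range.mpr (by omega)) rfl
  · intro k hk
    exact walkProd_apply_delta_getVert hedge p hp (Nat.lt_succ_iff.mp (Finset.mem_range.mp hk))
  · have : 0 ≤ (1 - ‖z‖)⁻¹ := inv_nonneg.mpr (by linarith)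
    linarith
  · simpa [sq] using schur_test _ _ (pathKernel ‖z‖)
      (fun m _ k _ => norm_pathEntry_le hz.le _ m k) (fun m _ => sum_pathKernel_left_le hr0 hz _ m)
      (fun k _ => sum_pathKernel_right_le hr0 hz _ k) a

end PathProduct

theorem pi_z_uniformly_bounded_general {X : Type} [DecidableEq X] (T : SimpleGraph X)
    (hconn : T.Connected)
    (c : ℂ → X → X → (ell2 X →L[ℂ] ell2 X))
    (hedge : ∀ z ∈ Metric.ball (0 : ℂ) 1, ∀ u v : X, T.Adj u v →
      IsEdgeOp z u v (c z u v))
    (hgeo : ∀ z ∈ Metric.ball (0 : ℂ) 1, ∀ u v : X, ∀ p : T.Walk u v,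
      p.length = T.dist u v → c z u v = walkProd (c z) p)
    {G : Type} [Group G] [MulAction G X]
    (U : G → (ell2 X →L[ℂ] ell2 X))
    (hU : ∀ (g : G) (v : X), U g (delta v) = delta (g • v))
    (x₀ : X) :
    (∀ z ∈ Metric.ball (0 : ℂ) 1, ∀ g : G,
      ‖c z x₀ (g • x₀) * U g‖ ≤ 4 * (1 - ‖z‖)⁻¹) ∧
    (∀ K : Set ℂ, K ⊆ Metric.ball (0 : ℂ) 1 → IsCompact K →
      ∃ M : ℝ, ∀ g : G, ∀ z ∈ K, ‖c z x₀ (g • x₀) * U g‖ ≤ M) := by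
  have hbound : ∀ z ∈ Metric.ball (0 : ℂ) 1, ∀ g : G,
      ‖c z x₀ (g • x₀) * U g‖ ≤ 4 * (1 - ‖z‖)⁻¹ := by
    intro z hz g
    have hz' : ‖z‖ < 1 := mem_ball_zero_iff.mp hz
    have hinv : 1 ≤ (1 - ‖z‖)⁻¹ := one_le_inv₀ (by linarith) |>.mpr (by linarith [norm_nonneg z])
    obtain ⟨p, hp, hlen⟩ := hconn.exists_path_of_dist x₀ (g • x₀)
    have hUg : ‖U g‖ ≤ 1 := Ell2.opNorm_le_one_of_map_delta (U g) (MulAction.injective g) (hU g)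
    calc ‖c z x₀ (g • x₀) * U g‖ ≤ ‖walkProd (c z) p‖ * ‖U g‖ := by
          rw [hgeo z hz _ _ p hlen]
          exact norm_mul_le _ _
      _ ≤ (2 * (1 - ‖z‖)⁻¹ + 1) * 1 := by
          gcongr
          exact norm_walkProd_le hz' (hedge z hz) p hp
      _ ≤ 4 * (1 - ‖z‖)⁻¹ := by linarith
  refine ⟨hbound, fun K hK hKc => ?_⟩
  have hcont : ContinuousOn (fun z : ℂ => 4 * (1 - ‖z‖)⁻¹) K :=
    continuousOn_const.mul <| (continuousOn_const.sub continuous_norm.continuousOn).inv₀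
      fun z hz => (sub_pos.mpr (mem_ball_zero_iff.mp (hK hz))).ne'
  obtain ⟨M, hM⟩ := hKc.exists_bound_of_continuousOn hcont
  exact ⟨M, fun g z hz => (hbound z (hK hz) g).trans ((le_abs_self _).trans (hM z hz))⟩

/-- For every `z ∈ 𝔻` the representation `π_z` is uniformly bounded:
`‖π_z(g)‖ ≤ 4(1 − |z|)⁻¹` for every `g ∈ G`.  In particular, for every compact subset
`K ⊆ 𝔻`, `sup { ‖π_z(g)‖ : g ∈ G, z ∈ K } < ∞`. -/
theorem pi_z_uniformly_bounded {X : Type} [DecidableEq X] (T : SimpleGraph X)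
    (hconn : T.Connected) (hacyc : T.IsAcyclic)
    (c : ℂ → X → X → (ell2 X →L[ℂ] ell2 X))
    (hedge : ∀ z ∈ Metric.ball (0 : ℂ) 1, ∀ u v : X, T.Adj u v →
      IsEdgeOp z u v (c z u v))
    (hgeo : ∀ z ∈ Metric.ball (0 : ℂ) 1, ∀ u v : X, ∀ p : T.Walk u v,
      p.length = T.dist u v → c z u v = walkProd (c z) p)
    {G : Type} [Group G] [MulAction G X]
    (hact : ∀ (g : G) (u v : X), T.Adj u v ↔ T.Adj (g • u) (g • v))
    (U : G → (ell2 X →L[ℂ] ell2 X))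
    (hU : ∀ (g : G) (v : X), U g (delta v) = delta (g • v))
    (x₀ : X) :
    (∀ z ∈ Metric.ball (0 : ℂ) 1, ∀ g : G,
      ‖c z x₀ (g • x₀) * U g‖ ≤ 4 * (1 - ‖z‖)⁻¹) ∧
    (∀ K : Set ℂ, K ⊆ Metric.ball (0 : ℂ) 1 → IsCompact K →
      ∃ M : ℝ, ∀ g : G, ∀ z ∈ K, ‖c z x₀ (g • x₀) * U g‖ ≤ M) :=
  pi_z_uniformly_bounded_general T hconn c hedge hgeo U hU x₀
end
end

section
/- The family {π_z}_{z∈𝔻} is a holomorphic family of representations: for every g ∈ G and every pair of vectors ξ, ξ′ ∈ ℓ²(X), the function z ↦ ⟨π_z(g)ξ, ξ′⟩ is holomorphic (complex differentiable) on the open unit disk 𝔻. -/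
noncomputable section

open scoped ComplexConjugate

/-
On a single edge, `c_z(u,v)` is determined by its values on the Dirac basis, so it equals
`1 + (w - 1)(E_{uu} + E_{vv}) + z(E_{uv} - E_{vu})`, where `E_{uv}` is the matrix unit
`δ_v ↦ δ_u`; this is holomorphic on the disk because `1 - z²` stays in the slit plane there.
Along a geodesic, `c_z(x, g·x)` is a finite product of such factors, hence holomorphic, and so
are its matrix coefficients.
-/

open ContinuousLinearMap Metric

section walkProd

variable {X : Type} {T : SimpleGraph X} {E : Type} [Monoid E]

lemma walkProd_congr {f g : X → X → E} (hfg : ∀ a b, T.Adj a b → f a b = g a b)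
    {u v : X} (p : T.Walk u v) : walkProd f p = walkProd g p := by
  induction p with
  | nil => rfl
  | cons h p ih => simp only [walkProd, hfg _ _ h, ih]

lemma DifferentiableOn.walkProd {A : Type} [NormedRing A] [NormedAlgebra ℂ A]
    {f : ℂ → X → X → A} {s : Set ℂ} (hf : ∀ a b, DifferentiableOn ℂ (fun z => f z a b) s)
    {u v : X} (p : T.Walk u v) : DifferentiableOn ℂ (fun z => _root_.walkProd (f z) p) s := by
  induction p with
  | nil => exact differentiableOn_const 1
  | cons _ p ih => exact (hf _ _).mul ih

end walkProd

section edgeOp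

variable {X : Type} [DecidableEq X]

lemma ell2_ext_delta {A B : ell2 X →L[ℂ] ell2 X}
    (h : ∀ v : X, A (delta v) = B (delta v)) : A = B :=
  lp.ext_continuousLinearMap (by norm_num) fun v => ext_ring (h v)

lemma inner_delta_delta (v w : X) :
    (inner ℂ (delta v) (delta w) : ℂ) = if v = w then 1 else 0 := by
  rw [delta, delta, lp.inner_single_left]
  rcases eq_or_ne v w with rfl | h
  · simp
  · simp [h]

def matrixUnit (u v : X) : ell2 X →L[ℂ] ell2 X :=
  (innerSL ℂ (delta v)).smulRight (delta u)

lemma matrixUnit_delta (u v w : X) :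
    matrixUnit u v (delta w) = if v = w then delta u else 0 := by
  simp only [matrixUnit, smulRight_apply, innerSL_apply_apply, inner_delta_delta]
  split_ifs <;> simp

def edgeOp (z : ℂ) (u v : X) : ell2 X →L[ℂ] ell2 X :=
  1 + (W z - 1) • (matrixUnit u u + matrixUnit v v) + z • (matrixUnit u v - matrixUnit v u)

lemma isEdgeOp_edgeOp (z : ℂ) {u v : X} (huv : u ≠ v) : IsEdgeOp z u v (edgeOp z u v) := by
  refine ⟨?_, ?_, fun w hwu hwv => ?_⟩ <;>
  simp only [edgeOp, add_apply, smul_apply, one_apply_eq_self, sub_apply,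
    matrixUnit_delta, huv, huv.symm, ↓reduceIte, add_zero, sub_zero, zero_sub,
    zero_add, smul_neg, sub_smul, one_smul]
  · abel
  · abel
  · simp [Ne.symm hwu, Ne.symm hwv]

lemma IsEdgeOp.eq {z : ℂ} {u v : X} {A B : ell2 X →L[ℂ] ell2 X}
    (hA : IsEdgeOp z u v A) (hB : IsEdgeOp z u v B) : A = B := by
  refine ell2_ext_delta fun w => ?_
  rcases eq_or_ne w u with rfl | hwu
  · rw [hA.1, hB.1]
  rcases eq_or_ne w v with rfl | hwv
  · rw [hA.2.1, hB.2.1]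
  · rw [hA.2.2 w hwu hwv, hB.2.2 w hwu hwv]

lemma differentiableOn_W : DifferentiableOn ℂ W (ball (0 : ℂ) 1) := by
  refine ((differentiable_const 1).sub (differentiable_pow 2)).differentiableOn.cpow_const
    fun z hz => ?_
  have hz2 : ‖-z ^ 2‖ < 1 := by
    rw [norm_neg, norm_pow]
    exact pow_lt_one₀ (norm_nonneg z) (mem_ball_zero_iff.mp hz) two_ne_zero
  simpa [sub_eq_add_neg] using Complex.mem_slitPlane_of_norm_lt_one hz2

lemma differentiableOn_edgeOp (u v : X) :
    DifferentiableOn ℂ (fun z => edgeOp z u v) (ball (0 : ℂ) 1) :=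
  ((differentiableOn_const 1).add ((differentiableOn_W.sub (differentiableOn_const 1)).smul
    (differentiableOn_const _))).add (differentiableOn_id.smul_const _)

end edgeOp

theorem pi_z_holomorphic_family_general {X : Type} [DecidableEq X] (T : SimpleGraph X)
    (hconn : T.Connected)
    (c : ℂ → X → X → (ell2 X →L[ℂ] ell2 X))
    (hedge : ∀ z ∈ Metric.ball (0 : ℂ) 1, ∀ u v : X, T.Adj u v →
      IsEdgeOp z u v (c z u v))
    (hgeo : ∀ z ∈ Metric.ball (0 : ℂ) 1, ∀ u v : X, ∀ p : T.Walk u v,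
      p.length = T.dist u v → c z u v = walkProd (c z) p)
    {G : Type} [Group G] [MulAction G X]
    (U : G → (ell2 X →L[ℂ] ell2 X))
    (x₀ : X) :
    ∀ g : G, ∀ ξ ξ' : ell2 X,
      DifferentiableOn ℂ
        (fun z : ℂ => (inner ℂ ξ' ((c z x₀ (g • x₀) * U g) ξ) : ℂ))
        (Metric.ball (0 : ℂ) 1) := by
  intro g ξ ξ'
  obtain ⟨p, hp⟩ := hconn.exists_walk_length_eq_dist x₀ (g • x₀)
  have hc : ∀ z ∈ ball (0 : ℂ) 1, c z x₀ (g • x₀) = walkProd (edgeOp z) p := fun z hz => by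
    rw [hgeo z hz _ _ p hp]
    exact walkProd_congr (fun a b h => (hedge z hz a b h).eq (isEdgeOp_edgeOp z h.ne)) p
  have hdiff : DifferentiableOn ℂ (fun z => walkProd (edgeOp z) p) (ball (0 : ℂ) 1) :=
    DifferentiableOn.walkProd differentiableOn_edgeOp p
  have hcoeff : DifferentiableOn ℂ
      (fun z => (inner ℂ ξ' ((walkProd (edgeOp z) p * U g) ξ) : ℂ)) (ball (0 : ℂ) 1) :=
    (innerSL ℂ ξ').differentiable.comp_differentiableOn
      ((hdiff.mul_const (U g)).clm_apply (differentiableOn_const ξ))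
  exact hcoeff.congr fun z hz => by simp only [hc z hz]

/-- The family `{π_z}_{z∈𝔻}` is a holomorphic family of representations:
for every `g ∈ G` and every pair of vectors `ξ, ξ′ ∈ ℓ²(X)`, the matrix coefficient
`z ↦ ⟨π_z(g)ξ, ξ′⟩` is holomorphic on the open unit disk `𝔻`. -/
theorem pi_z_holomorphic_family {X : Type} [DecidableEq X] (T : SimpleGraph X)
    (hconn : T.Connected) (hacyc : T.IsAcyclic)
    (c : ℂ → X → X → (ell2 X →L[ℂ] ell2 X))
    (hedge : ∀ z ∈ Metric.ball (0 : ℂ) 1, ∀ u v : X, T.Adj u v →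
      IsEdgeOp z u v (c z u v))
    (hgeo : ∀ z ∈ Metric.ball (0 : ℂ) 1, ∀ u v : X, ∀ p : T.Walk u v,
      p.length = T.dist u v → c z u v = walkProd (c z) p)
    {G : Type} [Group G] [MulAction G X]
    (hact : ∀ (g : G) (u v : X), T.Adj u v ↔ T.Adj (g • u) (g • v))
    (U : G → (ell2 X →L[ℂ] ell2 X))
    (hU : ∀ (g : G) (v : X), U g (delta v) = delta (g • v))
    (x₀ : X) :
    ∀ g : G, ∀ ξ ξ' : ell2 X,
      DifferentiableOn ℂ
        (fun z : ℂ => (inner ℂ ξ' ((c z x₀ (g • x₀) * U g) ξ) : ℂ))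
        (Metric.ball (0 : ℂ) 1) :=
  pi_z_holomorphic_family_general T hconn c hedge hgeo U x₀
end
end
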